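/- Let φ ∈ A = F[x,y,z] be a weight homogeneous polynomial with an isolated singularity. For any families of constants c = (c^k_{l,i}) and c̄ = (c̄^k_r) which are finitely supported at each order k, the bracket π_* = {·,·}_φ + Σ_{n≥1} π_n ν^n given by the explicit deformation formula, extended F[[ν]]-bilinearly to A[[ν]], satisfies the Jacobi identity; hence π_* is a formal deformation of the Poisson structure {·,·}_φ. Equivalently, for every n ≥ 0 and all F,G,H ∈ A: Σ_{a+b=n, a,b≥0} [ π_a(π_b(F,G),H) + π_a(π_b(G,H),F) + π_a(π_b(H,F),G) ] = 0, where π₀ = {·,·}_φ. -/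

import Mathlib

open MvPolynomial

/-- The exact Poisson bracket `{P,Q}_ψ = det Jac(ψ,P,Q)` on `F[x,y,z]`. -/
noncomputable def pbr {F : Type*} [Field F] (ψ P Q : MvPolynomial (Fin 3) F) :
    MvPolynomial (Fin 3) F :=
  pderiv 0 ψ * (pderiv 1 P * pderiv 2 Q - pderiv 2 P * pderiv 1 Q)
  + pderiv 1 ψ * (pderiv 2 P * pderiv 0 Q - pderiv 0 P * pderiv 2 Q)
  + pderiv 2 ψ * (pderiv 0 P * pderiv 1 Q - pderiv 1 P * pderiv 0 Q)

/-- Weight homogeneity: every monomial of φ has weighted degree d w.r.t. the weights w. -/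
def IsWeightHomogeneous {F : Type*} [Field F] (w : Fin 3 → ℕ)
    (φ : MvPolynomial (Fin 3) F) (d : ℕ) : Prop :=
  ∀ m ∈ φ.support, (∑ i, m i * w i) = d

/-- The Jacobian ideal of φ, generated by its three partial derivatives. -/
noncomputable def jacobianIdeal {F : Type*} [Field F] (φ : MvPolynomial (Fin 3) F) :
    Ideal (MvPolynomial (Fin 3) F) :=
  Ideal.span {pderiv 0 φ, pderiv 1 φ, pderiv 2 φ}

/-- Isolated singularity: the Milnor algebra A_sing(φ) is finite-dimensional over F. -/
abbrev HasIsolatedSingularity {F : Type*} [Field F] (φ : MvPolynomial (Fin 3) F) : Prop :=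
  FiniteDimensional F (MvPolynomial (Fin 3) F ⧸ jacobianIdeal φ)

/-- The coefficients π_n of the explicit formal deformation
π_* = {·,·}_φ + Σ_{n≥1} π_n ν^n of the proposition: for n ≥ 1,
π_n = Σ_{(l,i), r, a+b=n, a,b≥1} c^a_{l,i} c̄^b_r φ^l u_i {·,·}_{u_r}
      + Σ_{(m,j)} c^n_{m,j} φ^m u_j {·,·}_φ + Σ_s c̄^n_s {·,·}_{u_s};
here z is the index 0 of the family u (with u z = 1), which is excluded from the
range of r and s. -/
noncomputable def defPi {F : Type*} [Field F] (φ : MvPolynomial (Fin 3) F) {μ : ℕ}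
    (z : Fin μ) (u : Fin μ → MvPolynomial (Fin 3) F)
    (cc : ℕ → (ℕ × Fin μ) →₀ F) (cb : ℕ → Fin μ → F) :
    ℕ → MvPolynomial (Fin 3) F → MvPolynomial (Fin 3) F → MvPolynomial (Fin 3) F
  | 0 => pbr φ
  | n + 1 => fun P Q =>
      (∑ a ∈ Finset.Ioo 0 (n + 1), (cc a).sum fun p coef =>
        ∑ r ∈ Finset.univ.erase z,
          C coef * C (cb (n + 1 - a) r) * φ ^ p.1 * u p.2 * pbr (u r) P Q)
      + (cc (n + 1)).sum (fun p coef => C coef * φ ^ p.1 * u p.2 * pbr φ P Q)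
      + ∑ s ∈ Finset.univ.erase z, C (cb (n + 1) s) * pbr (u s) P Q

/-!
The deformation formula factors as `π_* = A(ν) {·,·}_{B(ν)}` with
`A(ν) = 1 + Σ_{k ≥ 1} Σ_{l,i} c^k_{l,i} φ^l u_i ν^k` and `B(ν) = φ + Σ_{k ≥ 1} Σ_s c̄^k_s u_s ν^k`.
Every bracket `h {·,·}_ψ` on `F[x,y,z]` satisfies the Jacobi identity, which is quadratic in `h`
and in `ψ`, so its polarization vanishes. The order-`n` Jacobiator of `A(ν) {·,·}_{B(ν)}` is a
sum of polarized Jacobiators over the indices `c + e + f + g = n` of `A_c, B_e, A_f, B_g`; this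
index set is invariant under the symmetries of the polarized identity, so four times the sum
vanishes.
-/

open Finset

theorem MvPolynomial.pderiv_pderiv_comm {R σ : Type*} [CommSemiring R] (i j : σ)
    (p : MvPolynomial σ R) : pderiv i (pderiv j p) = pderiv j (pderiv i p) := by
  classical
  induction p using MvPolynomial.induction_on with
  | C a => simp
  | add p q hp hq => simp [hp, hq]
  | mul_X p k hp =>
    simp only [pderiv_mul, map_add, hp, pderiv_X, Pi.single_apply]
    split_ifs <;> simp [add_right_comm]

theorem sum_antidiagonal_antidiagonal_transpose {M : Type*} [AddCommMonoid M] (n : ℕ)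
    (f : ℕ → ℕ → ℕ → ℕ → M) :
    ∑ p ∈ antidiagonal n, ∑ q ∈ antidiagonal p.1, ∑ r ∈ antidiagonal p.2, f q.1 q.2 r.1 r.2 =
      ∑ p ∈ antidiagonal n, ∑ q ∈ antidiagonal p.1, ∑ r ∈ antidiagonal p.2,
        f q.1 r.1 q.2 r.2 := by
  simp only [← sum_product', sum_sigma']
  let τ : (Σ _ : ℕ × ℕ, (ℕ × ℕ) × (ℕ × ℕ)) → Σ _ : ℕ × ℕ, (ℕ × ℕ) × (ℕ × ℕ) :=
    fun x => ⟨(x.2.1.1 + x.2.2.1, x.2.1.2 + x.2.2.2), (x.2.1.1, x.2.2.1), (x.2.1.2, x.2.2.2)⟩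
  have hτ : ∀ x ∈ (antidiagonal n).sigma fun p => antidiagonal p.1 ×ˢ antidiagonal p.2,
      τ x ∈ (antidiagonal n).sigma fun p => antidiagonal p.1 ×ˢ antidiagonal p.2 := by
    rintro ⟨⟨a, b⟩, ⟨c, e⟩, ⟨f, g⟩⟩ h
    simp only [τ, mem_sigma, mem_product, HasAntidiagonal.mem_antidiagonal, and_true] at h ⊢
    omega
  have hττ : ∀ x ∈ (antidiagonal n).sigma fun p => antidiagonal p.1 ×ˢ antidiagonal p.2,
      τ (τ x) = x := by
    rintro ⟨⟨a, b⟩, ⟨c, e⟩, ⟨f, g⟩⟩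
    simp only [mem_sigma, mem_product, HasAntidiagonal.mem_antidiagonal]
    rintro ⟨rfl, rfl, rfl⟩
    rfl
  exact sum_nbij' τ τ hτ hτ hττ hττ fun _ _ => rfl

def jacobiator {α : Type*} [Add α] (π π' : α → α → α) (P Q W : α) : α :=
  π (π' P Q) W + π (π' Q W) P + π (π' W P) Q

section Brackets

variable {F : Type*} [Field F]

theorem pbr_C_mul_left (c : F) (f P Q : MvPolynomial (Fin 3) F) :
    pbr (C c * f) P Q = C c * pbr f P Q := by
  simp only [pbr, pderiv_C_mul]; ring

theorem pbr_sum_left {ι : Type*} (s : Finset ι) (f : ι → MvPolynomial (Fin 3) F)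
    (P Q : MvPolynomial (Fin 3) F) : pbr (∑ i ∈ s, f i) P Q = ∑ i ∈ s, pbr (f i) P Q := by
  simp only [pbr, map_sum, sum_mul, ← sum_add_distrib]

theorem pbr_sum_mid {ι : Type*} (s : Finset ι) (ψ : MvPolynomial (Fin 3) F)
    (f : ι → MvPolynomial (Fin 3) F) (Q : MvPolynomial (Fin 3) F) :
    pbr ψ (∑ i ∈ s, f i) Q = ∑ i ∈ s, pbr ψ (f i) Q := by
  simp only [pbr, map_sum, sum_mul, mul_sum, ← sum_sub_distrib, ← sum_add_distrib]

noncomputable def scaledPbr (h ψ P Q : MvPolynomial (Fin 3) F) : MvPolynomial (Fin 3) F :=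
  h * pbr ψ P Q

/-- Polarization of the Jacobi identity for `h {·,·}_ψ`, which is quadratic both in `h` and
in `ψ`. -/
theorem jacobiator_scaledPbr_polarized (h ψ k χ P Q W : MvPolynomial (Fin 3) F) :
    jacobiator (scaledPbr h ψ) (scaledPbr k χ) P Q W
      + jacobiator (scaledPbr k χ) (scaledPbr h ψ) P Q W
      + jacobiator (scaledPbr h χ) (scaledPbr k ψ) P Q W
      + jacobiator (scaledPbr k ψ) (scaledPbr h χ) P Q W = 0 := by
  have c10 (p : MvPolynomial (Fin 3) F) := pderiv_pderiv_comm 1 0 p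
  have c20 (p : MvPolynomial (Fin 3) F) := pderiv_pderiv_comm 2 0 p
  have c21 (p : MvPolynomial (Fin 3) F) := pderiv_pderiv_comm 2 1 p
  simp only [jacobiator, scaledPbr, pbr, pderiv_mul, map_add, map_sub, c10, c20, c21]
  ring

/-- The coefficient of `νᵐ` in `A(ν) {·,·}_{B(ν)}`, where `A(ν) = Σ Aₖ νᵏ`, `B(ν) = Σ Bₖ νᵏ`. -/
noncomputable def seriesPbrCoeff (A B : ℕ → MvPolynomial (Fin 3) F) (m : ℕ)
    (P Q : MvPolynomial (Fin 3) F) : MvPolynomial (Fin 3) F :=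
  ∑ p ∈ antidiagonal m, scaledPbr (A p.1) (B p.2) P Q

theorem jacobiator_seriesPbrCoeff (A B : ℕ → MvPolynomial (Fin 3) F) (m m' : ℕ)
    (P Q W : MvPolynomial (Fin 3) F) :
    jacobiator (seriesPbrCoeff A B m) (seriesPbrCoeff A B m') P Q W =
      ∑ q ∈ antidiagonal m, ∑ r ∈ antidiagonal m',
        jacobiator (scaledPbr (A q.1) (B q.2)) (scaledPbr (A r.1) (B r.2)) P Q W := by
  simp only [jacobiator, seriesPbrCoeff, scaledPbr, pbr_sum_mid, mul_sum, ← sum_add_distrib]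

theorem sum_antidiagonal_jacobiator_seriesPbrCoeff [CharZero F]
    (A B : ℕ → MvPolynomial (Fin 3) F) (n : ℕ) (P Q W : MvPolynomial (Fin 3) F) :
    ∑ p ∈ antidiagonal n,
      jacobiator (seriesPbrCoeff A B p.1) (seriesPbrCoeff A B p.2) P Q W = 0 := by
  -- `q` collects the indices of `A`, `r` those of `B`.
  let U (q r : ℕ × ℕ) : MvPolynomial (Fin 3) F :=
    jacobiator (scaledPbr (A q.1) (B r.1)) (scaledPbr (A q.2) (B r.2)) P Q W
  let S := ∑ p ∈ antidiagonal n, ∑ q ∈ antidiagonal p.1, ∑ r ∈ antidiagonal p.2, U q r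
  have hS : ∑ p ∈ antidiagonal n,
      jacobiator (seriesPbrCoeff A B p.1) (seriesPbrCoeff A B p.2) P Q W = S := by
    simp only [jacobiator_seriesPbrCoeff]
    exact sum_antidiagonal_antidiagonal_transpose n fun c e f g =>
      jacobiator (scaledPbr (A c) (B e)) (scaledPbr (A f) (B g)) P Q W
  have swap_both : S = ∑ p ∈ antidiagonal n, ∑ q ∈ antidiagonal p.1, ∑ r ∈ antidiagonal p.2,
      U q.swap r.swap := sum_congr rfl fun p _ => Nat.sum_antidiagonal_swap.symm.trans <|
        sum_congr rfl fun q _ => Nat.sum_antidiagonal_swap.symm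
  have swap_right : S = ∑ p ∈ antidiagonal n, ∑ q ∈ antidiagonal p.1, ∑ r ∈ antidiagonal p.2,
      U q r.swap := sum_congr rfl fun p _ =>
        sum_congr rfl fun q _ => Nat.sum_antidiagonal_swap.symm
  have swap_left : S = ∑ p ∈ antidiagonal n, ∑ q ∈ antidiagonal p.1, ∑ r ∈ antidiagonal p.2,
      U q.swap r := sum_congr rfl fun p _ => Nat.sum_antidiagonal_swap.symm
  have hS4 : S + S + S + S = 0 :=
    calc S + S + S + S
        = ∑ p ∈ antidiagonal n, ∑ q ∈ antidiagonal p.1, ∑ r ∈ antidiagonal p.2,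
            (U q r + U q.swap r.swap + U q r.swap + U q.swap r) := by
          simp only [sum_add_distrib]
          rw [← swap_both, ← swap_right, ← swap_left]
      _ = 0 := sum_eq_zero fun p _ => sum_eq_zero fun q _ => sum_eq_zero fun r _ =>
          jacobiator_scaledPbr_polarized _ _ _ _ P Q W
  have h4S : (4 : MvPolynomial (Fin 3) F) * S = 0 := by linear_combination hS4
  rw [hS]
  exact (mul_eq_zero.mp h4S).resolve_left (by norm_num)

end Brackets

section DeformationFormula

variable {F : Type*} [Field F] {μ : ℕ}

noncomputable def multiplierCoeff (φ : MvPolynomial (Fin 3) F)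
    (u : Fin μ → MvPolynomial (Fin 3) F) (cc : ℕ → (ℕ × Fin μ) →₀ F) (a : ℕ) :
    MvPolynomial (Fin 3) F :=
  if a = 0 then 1 else (cc a).sum fun p coef => C coef * φ ^ p.1 * u p.2

noncomputable def potentialCoeff (φ : MvPolynomial (Fin 3) F) (z : Fin μ)
    (u : Fin μ → MvPolynomial (Fin 3) F) (cb : ℕ → Fin μ → F) (b : ℕ) :
    MvPolynomial (Fin 3) F :=
  if b = 0 then φ else ∑ s ∈ univ.erase z, C (cb b s) * u s

theorem defPi_eq_seriesPbrCoeff (φ : MvPolynomial (Fin 3) F) (z : Fin μ)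
    (u : Fin μ → MvPolynomial (Fin 3) F) (cc : ℕ → (ℕ × Fin μ) →₀ F) (cb : ℕ → Fin μ → F)
    (m : ℕ) :
    defPi φ z u cc cb m =
      seriesPbrCoeff (multiplierCoeff φ u cc) (potentialCoeff φ z u cb) m := by
  funext P Q
  rw [seriesPbrCoeff, Nat.sum_antidiagonal_eq_sum_range_succ
    (fun a b => scaledPbr (multiplierCoeff φ u cc a) (potentialCoeff φ z u cb b) P Q)]
  cases m with
  | zero => simp [defPi, scaledPbr, multiplierCoeff, potentialCoeff]
  | succ n =>
    have mixed : ∀ a ∈ Ioo 0 (n + 1),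
        ((cc a).sum fun p coef => ∑ r ∈ univ.erase z,
          C coef * C (cb (n + 1 - a) r) * φ ^ p.1 * u p.2 * pbr (u r) P Q) =
        scaledPbr (multiplierCoeff φ u cc a) (potentialCoeff φ z u cb (n + 1 - a)) P Q := by
      intro a ha
      rw [mem_Ioo] at ha
      simp only [scaledPbr, multiplierCoeff, potentialCoeff, if_neg ha.1.ne',
        if_neg (Nat.sub_ne_zero_of_lt ha.2), pbr_sum_left, pbr_C_mul_left, Finsupp.sum_mul]
      refine Finsupp.sum_congr fun p _ => ?_
      rw [mul_sum]
      exact sum_congr rfl fun r _ => by ring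
    rw [sum_range_succ, range_eq_Ico, sum_eq_sum_Ico_succ_bot (Nat.succ_pos n),
      Ico_add_one_left_eq_Ioo, ← sum_congr rfl mixed]
    simp only [defPi, scaledPbr, multiplierCoeff, potentialCoeff, if_pos, Nat.sub_zero,
      Nat.sub_self, if_neg (Nat.succ_ne_zero n), one_mul, pbr_sum_left, pbr_C_mul_left,
      Finsupp.sum_mul]
    abel

end DeformationFormula

theorem statement13_general {F : Type*} [Field F] [CharZero F]
    (φ : MvPolynomial (Fin 3) F)
    (μ : ℕ) (hμ : 0 < μ)
    (u : Fin μ → MvPolynomial (Fin 3) F)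
    (cc : ℕ → (ℕ × Fin μ) →₀ F) (cb : ℕ → Fin μ → F) :
    ∀ (n : ℕ) (P Q R : MvPolynomial (Fin 3) F),
      ∑ a ∈ Finset.range (n + 1),
        (defPi φ ⟨0, hμ⟩ u cc cb a (defPi φ ⟨0, hμ⟩ u cc cb (n - a) P Q) R
          + defPi φ ⟨0, hμ⟩ u cc cb a (defPi φ ⟨0, hμ⟩ u cc cb (n - a) Q R) P
          + defPi φ ⟨0, hμ⟩ u cc cb a (defPi φ ⟨0, hμ⟩ u cc cb (n - a) R P) Q) = 0 := by
  intro n P Q R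
  have jacobi := sum_antidiagonal_jacobiator_seriesPbrCoeff (multiplierCoeff φ u cc)
    (potentialCoeff φ ⟨0, hμ⟩ u cb) n P Q R
  rw [Nat.sum_antidiagonal_eq_sum_range_succ fun a b =>
    jacobiator (seriesPbrCoeff _ _ a) (seriesPbrCoeff _ _ b) P Q R] at jacobi
  simpa only [← defPi_eq_seriesPbrCoeff, jacobiator] using jacobi

/-- the explicit deformation formula always yields a formal deformation of
{·,·}_φ: the bracket π_* = Σ_n π_n ν^n (with π_0 = {·,·}_φ) satisfies the Jacobi identity
order by order in ν. -/
theorem statement13 {F : Type*} [Field F] [CharZero F] (w : Fin 3 → ℕ) (hw : ∀ i, 0 < w i)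
    (hgcd : Nat.gcd (w 0) (Nat.gcd (w 1) (w 2)) = 1)
    (φ : MvPolynomial (Fin 3) F) (d : ℕ) (hφ : IsWeightHomogeneous w φ d)
    (hsing : HasIsolatedSingularity φ)
    (μ : ℕ) (hμ : 0 < μ)
    (hdim : Module.finrank F (MvPolynomial (Fin 3) F ⧸ jacobianIdeal φ) = μ)
    (u : Fin μ → MvPolynomial (Fin 3) F) (hu0 : u ⟨0, hμ⟩ = 1)
    (huhom : ∀ i, ∃ e, IsWeightHomogeneous w (u i) e)
    (hubasis : LinearIndependent F
        (fun i => Ideal.Quotient.mk (jacobianIdeal φ) (u i)) ∧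
      Submodule.span F
        (Set.range (fun i => Ideal.Quotient.mk (jacobianIdeal φ) (u i))) = ⊤)
    (cc : ℕ → (ℕ × Fin μ) →₀ F) (cb : ℕ → Fin μ → F)
    (hccE : d ≠ w 0 + w 1 + w 2 → ∀ k l, cc k (l, ⟨0, hμ⟩) = 0)
    (hcb0 : ∀ k, cb k ⟨0, hμ⟩ = 0) :
    ∀ (n : ℕ) (P Q R : MvPolynomial (Fin 3) F),
      ∑ a ∈ Finset.range (n + 1),
        (defPi φ ⟨0, hμ⟩ u cc cb a (defPi φ ⟨0, hμ⟩ u cc cb (n - a) P Q) R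
          + defPi φ ⟨0, hμ⟩ u cc cb a (defPi φ ⟨0, hμ⟩ u cc cb (n - a) Q R) P
          + defPi φ ⟨0, hμ⟩ u cc cb a (defPi φ ⟨0, hμ⟩ u cc cb (n - a) R P) Q) = 0 :=
  statement13_general φ μ hμ u cc cb
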